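/- Discounted comparison principle: fix λ ∈ (0,1) and let u_λ be the unique fixed point of T⁻_λ. If v₁, v₂ are bounded functions with v₁ ≤ T⁻_λ v₁ and v₂ ≥ T⁻_λ v₂ pointwise, then v₁ ≤ u_λ ≤ v₂. Consequently, if u is a continuous weak KAM solution (u = T⁻u + c₀) and ū = u + K ≥ 0, u̲ = u − K ≤ 0 for some constant K, then u̲ − c₀/(1−λ) ≤ u_λ ≤ ū − c₀/(1−λ), so the family (u_λ + c₀/(1−λ))_{λ ∈ (0,1)} is uniformly bounded. -/

import Mathlib

/-!
The discounted operator satisfies `Tlam c lam (g + D) = Tlam c lam g + lam * D` and is monotone.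
Hence, if `v ≤ Tlam v`, `Tlam w ≤ w` and `D = sup (v - w)`, then
`v - w ≤ Tlam v - Tlam w ≤ lam * D`, so `D ≤ lam * D` and `D ≤ 0`.

For a weak KAM solution `u` and `a = c₀ / (1 - lam)`, the functions `u - K - a` and `u + K - a`
are a sub- and a supersolution: `lam * (u ± K)` differs from `u ± K` by `(1 - lam) * (u ± K)`,
whose sign is fixed by `-K ≤ u ≤ K`, and `a - lam * a = c₀` absorbs the critical constant.
-/

/-- The (negative) Lax–Oleinik operator. -/
noncomputable def Tminus {X : Type*} (c : X × X → ℝ) (f : X → ℝ) : X → ℝ :=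
  fun x => ⨅ y, (f y + c (y, x))

/-- The discounted Lax–Oleinik operator. -/
noncomputable def Tlam {X : Type*} (c : X × X → ℝ) (lam : ℝ) (f : X → ℝ) : X → ℝ :=
  fun x => ⨅ y, (lam * f y + c (y, x))

open Set Bornology

lemma bddAbove_range_sub {α β : Type*} [AddCommGroup β] [PartialOrder β] [IsOrderedAddMonoid β]
    {f g : α → β} (hf : BddAbove (range f)) (hg : BddBelow (range g)) :
    BddAbove (range fun y => f y - g y) := by
  obtain ⟨a, ha⟩ := hf
  obtain ⟨b, hb⟩ := hg
  exact ⟨a - b, forall_mem_range.2 fun y => sub_le_sub (ha ⟨y, rfl⟩) (hb ⟨y, rfl⟩)⟩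

lemma isBounded_range_of_abs_le {α : Type*} {f : α → ℝ} {M : ℝ} (h : ∀ x, |f x| ≤ M) :
    IsBounded (range f) :=
  isBounded_iff_forall_norm_le.2 ⟨M, forall_mem_range.2 h⟩

section LaxOleinik

variable {X : Type*} {c : X × X → ℝ} {f g u v w : X → ℝ} {lam c₀ K : ℝ}

lemma bddBelow_range_add_cost (hc : BddBelow (range c)) (hf : BddBelow (range f)) (x : X) :
    BddBelow (range fun y => f y + c (y, x)) := by
  obtain ⟨a, ha⟩ := hf
  obtain ⟨b, hb⟩ := hc
  exact ⟨a + b, forall_mem_range.2 fun y => add_le_add (ha ⟨y, rfl⟩) (hb ⟨(y, x), rfl⟩)⟩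

lemma Tminus_le (hc : BddBelow (range c)) (hf : BddBelow (range f)) (x y : X) :
    Tminus c f x ≤ f y + c (y, x) :=
  ciInf_le (bddBelow_range_add_cost hc hf x) y

lemma le_Tminus {a : ℝ} {x : X} (h : ∀ y, a ≤ f y + c (y, x)) : a ≤ Tminus c f x :=
  have : Nonempty X := ⟨x⟩
  le_ciInf h

lemma Tminus_le_Tminus_add (hc : BddBelow (range c)) (hf : BddBelow (range f)) {D : ℝ}
    (hfg : ∀ y, f y ≤ g y + D) (x : X) : Tminus c f x ≤ Tminus c g x + D :=
  sub_le_iff_le_add.1 <| le_Tminus fun y =>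
    sub_le_iff_le_add.2 <| (Tminus_le hc hf x y).trans (by linarith [hfg y])

lemma Tlam_eq_Tminus : Tlam c lam f = Tminus c fun y => lam * f y := rfl

theorem Tlam_comparison (hc : BddBelow (range c)) (hlam₀ : 0 ≤ lam) (hlam₁ : lam < 1)
    (hv : IsBounded (range v)) (hw : IsBounded (range w))
    (hsub : ∀ x, v x ≤ Tlam c lam v x) (hsup : ∀ x, Tlam c lam w x ≤ w x) (x : X) :
    v x ≤ w x := by
  have : Nonempty X := ⟨x⟩
  set D := ⨆ y, (v y - w y)
  have hD : ∀ y, v y - w y ≤ D := le_ciSup (bddAbove_range_sub hv.bddAbove hw.bddBelow)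
  have hTD : ∀ y, Tlam c lam v y ≤ Tlam c lam w y + lam * D :=
    Tminus_le_Tminus_add hc (hv.bddBelow.range_comp_left (monotone_mul_left_of_nonneg hlam₀))
      fun y => by nlinarith [hD y]
  have hD_le : D ≤ lam * D := ciSup_le fun y => by linarith [hsub y, hsup y, hTD y]
  have hD_nonpos : D ≤ 0 := by nlinarith
  linarith [hD x]

theorem le_Tlam_of_eq_Tminus_add (hc : BddBelow (range c)) (hu : BddBelow (range u))
    (hKAM : ∀ x, u x = Tminus c u x + c₀) (hlam : lam < 1) (hK : ∀ x, u x ≤ K) (x : X) :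
    u x - K - c₀ / (1 - lam) ≤ Tlam c lam (fun y => u y - K - c₀ / (1 - lam)) x := by
  have ha : (1 - lam) * (c₀ / (1 - lam)) = c₀ := mul_div_cancel₀ _ (by linarith)
  refine le_Tminus fun y => ?_
  have hy := Tminus_le hc hu x y
  nlinarith [hKAM x, hK y]

theorem Tlam_le_of_eq_Tminus_add (hc : BddBelow (range c)) (hu : BddBelow (range u))
    (hKAM : ∀ x, u x = Tminus c u x + c₀) (hlam₀ : 0 ≤ lam) (hlam₁ : lam < 1)
    (hK : ∀ x, -K ≤ u x) (x : X) :
    Tlam c lam (fun y => u y + K - c₀ / (1 - lam)) x ≤ u x + K - c₀ / (1 - lam) := by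
  have ha : (1 - lam) * (c₀ / (1 - lam)) = c₀ := mul_div_cancel₀ _ (by linarith)
  have hbdd : BddBelow (range fun y => lam * (u y + K - c₀ / (1 - lam))) :=
    hu.range_comp_left (g := fun t => lam * (t + K - c₀ / (1 - lam)))
      fun s t hst => mul_le_mul_of_nonneg_left (by linarith) hlam₀
  rw [Tlam_eq_Tminus]
  have := Tminus_le_Tminus_add hc hbdd (g := u) (D := K - lam * (c₀ / (1 - lam)))
    (fun y => by nlinarith [hK y]) x
  linarith [hKAM x]

end LaxOleinik

theorem stmt18_general {X : Type*} [MetricSpace X] [CompactSpace X]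
    (c : X × X → ℝ) (hc : Continuous c) (c₀ : ℝ)
    (lam : ℝ) (h0 : 0 < lam) (h1 : lam < 1)
    (ulam : X → ℝ) (hulam_bdd : ∃ M, ∀ x, |ulam x| ≤ M)
    (hulam : ∀ x, ulam x = Tlam c lam ulam x) :
    (∀ v₁ v₂ : X → ℝ, (∃ M, ∀ x, |v₁ x| ≤ M) → (∃ M, ∀ x, |v₂ x| ≤ M) →
        (∀ x, v₁ x ≤ Tlam c lam v₁ x) → (∀ x, Tlam c lam v₂ x ≤ v₂ x) →
        ∀ x, v₁ x ≤ ulam x ∧ ulam x ≤ v₂ x) ∧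
    (∀ u : X → ℝ, Continuous u → (∀ x, u x = Tminus c u x + c₀) →
        ∀ K : ℝ, (∀ x, 0 ≤ u x + K) → (∀ x, u x - K ≤ 0) →
        ∀ x, u x - K - c₀ / (1 - lam) ≤ ulam x ∧
          ulam x ≤ u x + K - c₀ / (1 - lam)) := by
  have hcb : BddBelow (range c) := (isCompact_range hc).bddBelow
  obtain ⟨M, hM⟩ := hulam_bdd
  have hub := isBounded_range_of_abs_le hM
  have hulam_sup : ∀ x, Tlam c lam ulam x ≤ ulam x := fun x => (hulam x).ge
  have hulam_sub : ∀ x, ulam x ≤ Tlam c lam ulam x := fun x => (hulam x).le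
  refine ⟨fun v₁ v₂ ⟨M₁, hM₁⟩ ⟨M₂, hM₂⟩ hsub hsup x =>
    ⟨Tlam_comparison hcb h0.le h1 (isBounded_range_of_abs_le hM₁) hub hsub hulam_sup x,
      Tlam_comparison hcb h0.le h1 hub (isBounded_range_of_abs_le hM₂) hulam_sub hsup x⟩, ?_⟩
  intro u hu hKAM K hK₁ hK₂ x
  have hbu : BddBelow (range u) := (isCompact_range hu).bddBelow
  have hsub := le_Tlam_of_eq_Tminus_add hcb hbu hKAM h1 fun y => sub_nonpos.1 (hK₂ y)
  have hsup := Tlam_le_of_eq_Tminus_add hcb hbu hKAM h0.le h1 fun y =>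
    neg_le_iff_add_nonneg.2 (hK₁ y)
  exact ⟨Tlam_comparison hcb h0.le h1 (isCompact_range (by fun_prop)).isBounded hub hsub
      hulam_sup x,
    Tlam_comparison hcb h0.le h1 hub (isCompact_range (by fun_prop)).isBounded hulam_sub hsup x⟩

theorem stmt18 {X : Type*} [MetricSpace X] [CompactSpace X] [Nonempty X]
    (c : X × X → ℝ) (hc : Continuous c) (c₀ : ℝ)
    (lam : ℝ) (h0 : 0 < lam) (h1 : lam < 1)
    (ulam : X → ℝ) (hulam_bdd : ∃ M, ∀ x, |ulam x| ≤ M)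
    (hulam : ∀ x, ulam x = Tlam c lam ulam x) :
    (∀ v₁ v₂ : X → ℝ, (∃ M, ∀ x, |v₁ x| ≤ M) → (∃ M, ∀ x, |v₂ x| ≤ M) →
        (∀ x, v₁ x ≤ Tlam c lam v₁ x) → (∀ x, Tlam c lam v₂ x ≤ v₂ x) →
        ∀ x, v₁ x ≤ ulam x ∧ ulam x ≤ v₂ x) ∧
    (∀ u : X → ℝ, Continuous u → (∀ x, u x = Tminus c u x + c₀) →
        ∀ K : ℝ, (∀ x, 0 ≤ u x + K) → (∀ x, u x - K ≤ 0) →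
        ∀ x, u x - K - c₀ / (1 - lam) ≤ ulam x ∧
          ulam x ≤ u x + K - c₀ / (1 - lam)) :=
  stmt18_general c hc c₀ lam h0 h1 ulam hulam_bdd hulam
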